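/- Suppose real-valued functions a, b, f on an interval satisfy: (1) a' + a² = b' + b², (2) f'' = λ + (n-1)(a' + a²), (3) (a+b)f' = (n-1)ab + λ, where n ≥ 4 is an integer and λ ∈ ℝ. Then (a' + a² + ab)·((n-1)ab + λ) = 0 pointwise. -/

import Mathlib

/-!
Differentiate `(a + b) f' = (n - 1) a b + λ` and eliminate `a'`, `b'`, `f''` using the other two
relations: with `P = a' + a² = b' + b²` one has `a' b + a b' = (a + b)(P - a b)`, and the
differentiated relation collapses to `2 (P + a b) ((n - 1) a b + λ) = 0`.
-/

open Filter Topology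

theorem deriv_add_mul_eq_of_eventuallyEq {a b g : ℝ → ℝ} {k lam s : ℝ}
    (ha : DifferentiableAt ℝ a s) (hb : DifferentiableAt ℝ b s) (hg : DifferentiableAt ℝ g s)
    (hrel : (fun t => (a t + b t) * g t) =ᶠ[𝓝 s] fun t => k * (a t * b t) + lam) :
    (deriv a s + deriv b s) * g s + (a s + b s) * deriv g s
      = k * (deriv a s * b s + a s * deriv b s) := by
  have hL := (ha.hasDerivAt.add hb.hasDerivAt).mul hg.hasDerivAt
  have hR := ((ha.hasDerivAt.mul hb.hasDerivAt).const_mul k).add_const lam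
  exact hL.unique (hR.congr_of_eventuallyEq hrel)

theorem riccati_product_eq_zero {k lam a b a' b' f' f'' : ℝ}
    (h1 : a' + a ^ 2 = b' + b ^ 2) (h2 : f'' = lam + k * (a' + a ^ 2))
    (h3 : (a + b) * f' = k * (a * b) + lam)
    (h3' : (a' + b') * f' + (a + b) * f'' = k * (a' * b + a * b')) :
    (a' + a ^ 2 + a * b) * (k * (a * b) + lam) = 0 := by
  linear_combination (1 / 2 : ℝ) * ((a + b) * h3' - (a' + b') * h3 - (a + b) ^ 2 * h2
    + (k * (a * b) + lam - k * (a + b) * a) * h1)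

theorem soliton_key_product_zero_general
    (n : ℕ) (lam : ℝ) (A B : ℝ)
    (a b f : ℝ → ℝ)
    (ha : ∀ s ∈ Set.Ioo A B, DifferentiableAt ℝ a s)
    (hb : ∀ s ∈ Set.Ioo A B, DifferentiableAt ℝ b s)
    (hf' : ∀ s ∈ Set.Ioo A B, DifferentiableAt ℝ (deriv f) s)
    (h1 : ∀ s ∈ Set.Ioo A B, deriv a s + (a s) ^ 2 = deriv b s + (b s) ^ 2)
    (h2 : ∀ s ∈ Set.Ioo A B,
      deriv (deriv f) s = lam + (n - 1) * (deriv a s + (a s) ^ 2))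
    (h3 : ∀ s ∈ Set.Ioo A B,
      (a s + b s) * deriv f s = (n - 1) * (a s * b s) + lam) :
    ∀ s ∈ Set.Ioo A B,
      (deriv a s + (a s) ^ 2 + a s * b s) * ((n - 1) * (a s * b s) + lam) = 0 := by
  intro s hs
  have h3_near : (fun t => (a t + b t) * deriv f t) =ᶠ[𝓝 s]
      fun t => (n - 1 : ℝ) * (a t * b t) + lam :=
    eventually_of_mem (isOpen_Ioo.mem_nhds hs) h3
  exact riccati_product_eq_zero (h1 s hs) (h2 s hs) (h3 s hs)
    (deriv_add_mul_eq_of_eventuallyEq (ha s hs) (hb s hs) (hf' s hs) h3_near)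

/-- From a'+a² = b'+b², f'' = λ+(n-1)(a'+a²) and (a+b)f' = (n-1)ab+λ one deduces
(a'+a²+ab)·((n-1)ab+λ) = 0 pointwise. -/
theorem soliton_key_product_zero
    (n : ℕ) (hn : 4 ≤ n) (lam : ℝ) (A B : ℝ) (hAB : A < B)
    (a b f : ℝ → ℝ)
    (ha : ∀ s ∈ Set.Ioo A B, DifferentiableAt ℝ a s)
    (hb : ∀ s ∈ Set.Ioo A B, DifferentiableAt ℝ b s)
    (hf : ∀ s ∈ Set.Ioo A B, DifferentiableAt ℝ f s)
    (hf' : ∀ s ∈ Set.Ioo A B, DifferentiableAt ℝ (deriv f) s)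
    (h1 : ∀ s ∈ Set.Ioo A B, deriv a s + (a s) ^ 2 = deriv b s + (b s) ^ 2)
    (h2 : ∀ s ∈ Set.Ioo A B,
      deriv (deriv f) s = lam + (n - 1) * (deriv a s + (a s) ^ 2))
    (h3 : ∀ s ∈ Set.Ioo A B,
      (a s + b s) * deriv f s = (n - 1) * (a s * b s) + lam) :
    ∀ s ∈ Set.Ioo A B,
      (deriv a s + (a s) ^ 2 + a s * b s) * ((n - 1) * (a s * b s) + lam) = 0 :=
  soliton_key_product_zero_general n lam A B a b f ha hb hf' h1 h2 h3
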